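/- arXiv:math/0009066 — 3 statements merged into one kernel-verified Lean document; each statement's English description precedes it below -/
import Mathlib

section
/- Let r ≥ 2 and n ≥ 1 be integers, R a commutative ℚ-algebra, ψ : Fin n → R, and c : (Fin n → ℤ) → R a function satisfying the abstract descent relation. Then for every tuple m : Fin n → ℤ with m j ≥ 0 for all j, if there exists an index i with m i = r - 1, then c m = 0. (This is the paper's Proposition that the Descent Axiom implies the Vanishing Axiom, stated for the abstract recurrence that the r-spin virtual class satisfies, using that the class ψ̃_i(m) = ((m_i+1)/r)·ψ_i vanishes when m_i = -1.) -/
/-- A tuple `m : Fin n → ℤ` is *admissible* if either all of its entries are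
nonnegative, or there is an index `j` with `m j = -1` and all other entries
nonnegative. -/
def Admissible {n : ℕ} (m : Fin n → ℤ) : Prop :=
  (∀ j, 0 ≤ m j) ∨ (∃ j, m j = -1 ∧ ∀ k, k ≠ j → 0 ≤ m k)

/-- The abstract descent relation modeling the Descent Axiom
`cᵛ(m + r δ_i) = -ψ̃_i(m) · cᵛ(m)` together with
`ψ̃_i(m) = ((m_i + 1)/r) · ψ_i`. -/
def DescentRelation {n : ℕ} (r : ℤ) {R : Type*} [CommRing R] [Algebra ℚ R]
    (ψ : Fin n → R) (c : (Fin n → ℤ) → R) : Prop :=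
  ∀ m : Fin n → ℤ, Admissible m → ∀ i : Fin n,
    c (m + r • Pi.single i 1) = (-(((m i : ℚ) + 1) / (r : ℚ))) • (ψ i * c m)

/-- The Descent Axiom implies the Vanishing Axiom: if `m` has all entries
nonnegative and some entry equal to `r - 1`, then `c m = 0`. -/
theorem descent_implies_vanishing {n : ℕ} (hn : 1 ≤ n) (r : ℤ) (hr : 2 ≤ r)
    {R : Type*} [CommRing R] [Algebra ℚ R]
    (ψ : Fin n → R) (c : (Fin n → ℤ) → R)
    (hc : DescentRelation r ψ c)
    (m : Fin n → ℤ) (hm : ∀ j, 0 ≤ m j)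
    (i : Fin n) (hi : m i = r - 1) :
    c m = 0 := by
  set m' : Fin n → ℤ := m - r • Pi.single i 1 with hm'
  have hmi : m' i = -1 := by
    simp [hm', hi, Pi.single_apply]
  have hadm : Admissible m' := by
    right
    exact ⟨i, hmi, fun k hk => by
      simpa [hm', Pi.single_apply, hk] using hm k⟩
  have key := hc m' hadm i
  have hmm : m' + r • Pi.single i 1 = m := by
    simp [hm']
  rw [hmm, hmi] at key
  simpa using key
end

section
/- Let r ≥ 2 and n ≥ 1 be integers, R a commutative ℚ-algebra, ψ : Fin n → R, and c : (Fin n → ℤ) → R a function satisfying the abstract descent relation. Let a : Fin n → ℕ be a tuple of nonnegative integers and m : Fin n → ℤ a tuple with 0 ≤ m i ≤ r - 1 for all i, and set m̃ = r·a + m (componentwise, viewing a in ℤ). Then c m̃ = c m · ∏_{i} ( (-(1/r) • ψ i)^{a i} · [r(a i - 1) + m i + 1]_r ), where the bracket factor is taken in R via the ℚ-algebra structure. (This is the paper's Proposition in Section 2 expressing all classes cᵛ(m̃), for arbitrary nonnegative m̃, as explicit multiples of cᵛ(m) times powers of the ψ classes, proved by repeated application of the Descent Axiom.) -/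
/-- The rational number `[r(a-1)+m+1]_r := ∏_{j=1}^{a} (r(a-j) + m + 1)`,
which equals `1` when `a = 0`. -/
def bracket (r : ℤ) (a : ℕ) (m : ℤ) : ℚ :=
  ∏ j ∈ Finset.range a, ((r : ℚ) * ((a : ℚ) - 1 - (j : ℚ)) + (m : ℚ) + 1)

lemma bracket_succ (r : ℤ) (a : ℕ) (m : ℤ) :
    bracket r (a + 1) m = ((r : ℚ) * (a : ℚ) + (m : ℚ) + 1) * bracket r a m := by
  unfold bracket
  rw [Finset.prod_range_succ']
  rw [mul_comm]
  congr 1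
  · push_cast
    ring
  · exact Finset.prod_congr rfl fun j _ => by push_cast; ring

/-- Repeated application of the Descent Axiom: for nonnegative `a : Fin n → ℕ`
and `m` with `0 ≤ m i ≤ r - 1`, setting `m̃ = r·a + m`, one has
`c m̃ = c m · ∏ i ((-(1/r) • ψ i)^(a i) · [r(a i - 1) + m i + 1]_r)`. -/
theorem descent_iterated {n : ℕ} (hn : 1 ≤ n) (r : ℤ) (hr : 2 ≤ r)
    {R : Type*} [CommRing R] [Algebra ℚ R]
    (ψ : Fin n → R) (c : (Fin n → ℤ) → R)
    (hc : DescentRelation r ψ c)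
    (a : Fin n → ℕ) (m : Fin n → ℤ)
    (hm : ∀ i, 0 ≤ m i ∧ m i ≤ r - 1) :
    c (fun i => r * (a i : ℤ) + m i) =
      c m * ∏ i, ((-((1 : ℚ) / (r : ℚ)) • ψ i) ^ (a i) *
        algebraMap ℚ R (bracket r (a i) (m i))) := by
  suffices H : ∀ N : ℕ, ∀ a : Fin n → ℕ, ∑ i, a i = N →
      c (fun i => r * (a i : ℤ) + m i) =
        c m * ∏ i, ((-((1 : ℚ) / (r : ℚ)) • ψ i) ^ (a i) *
          algebraMap ℚ R (bracket r (a i) (m i))) by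
    exact H (∑ i, a i) a rfl
  intro N
  induction N with
  | zero =>
    intro a ha
    have h0 : ∀ i, a i = 0 := fun i =>
      Finset.sum_eq_zero_iff.mp ha i (Finset.mem_univ i)
    simp [h0, bracket]
  | succ N IH =>
    intro a ha
    obtain ⟨i, hi⟩ : ∃ i, a i ≠ 0 := by
      by_contra h
      push_neg at h
      simp [h] at ha
    obtain ⟨b, hb⟩ : ∃ b, a i = b + 1 := ⟨a i - 1, by omega⟩
    set a' : Fin n → ℕ := Function.update a i b with ha'
    have hsum : ∑ j, a' j = N := by
      have h1 : ∑ j, a j = a i + ∑ j ∈ Finset.univ.erase i, a j :=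
        (Finset.add_sum_erase _ _ (Finset.mem_univ i)).symm
      have h2 : ∑ j, a' j = a' i + ∑ j ∈ Finset.univ.erase i, a' j :=
        (Finset.add_sum_erase _ _ (Finset.mem_univ i)).symm
      have h3 : ∑ j ∈ Finset.univ.erase i, a' j = ∑ j ∈ Finset.univ.erase i, a j :=
        Finset.sum_congr rfl fun j hj => by
          simp [ha', Function.update_of_ne (Finset.ne_of_mem_erase hj)]
      have h4 : a' i = b := by simp [ha']
      omega
    have IH' := IH a' hsum
    set m' : Fin n → ℤ := fun j => r * (a' j : ℤ) + m j with hm'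
    have hadm : Admissible m' := Or.inl fun j =>
      add_nonneg (mul_nonneg (by linarith) (Int.natCast_nonneg _)) (hm j).1
    have hstep := hc m' hadm i
    have hfun : m' + r • Pi.single i 1 = (fun j => r * (a j : ℤ) + m j) := by
      funext j
      by_cases h : j = i
      · subst h
        simp [hm', ha', hb, Pi.single_apply]
        ring
      · simp [hm', ha', Function.update_of_ne h, Pi.single_apply, h]
    rw [hfun] at hstep
    have hm'i : m' i = r * (b : ℤ) + m i := by simp [hm', ha']
    rw [hstep, IH', hm'i]
    rw [← Finset.mul_prod_erase Finset.univ
      (fun j => ((-((1 : ℚ) / (r : ℚ)) • ψ j) ^ (a j) *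
        algebraMap ℚ R (bracket r (a j) (m j)))) (Finset.mem_univ i)]
    rw [← Finset.mul_prod_erase Finset.univ
      (fun j => ((-((1 : ℚ) / (r : ℚ)) • ψ j) ^ (a' j) *
        algebraMap ℚ R (bracket r (a' j) (m j)))) (Finset.mem_univ i)]
    have herase : ∏ j ∈ Finset.univ.erase i,
        ((-((1 : ℚ) / (r : ℚ)) • ψ j) ^ (a' j) * algebraMap ℚ R (bracket r (a' j) (m j)))
        = ∏ j ∈ Finset.univ.erase i,
        ((-((1 : ℚ) / (r : ℚ)) • ψ j) ^ (a j) * algebraMap ℚ R (bracket r (a j) (m j))) :=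
      Finset.prod_congr rfl fun j hj => by
        simp [ha', Function.update_of_ne (Finset.ne_of_mem_erase hj)]
    rw [herase]
    have h4 : a' i = b := by simp [ha']
    rw [h4, hb, bracket_succ]
    have hscal : (-(((((r * (b : ℤ) + m i : ℤ)) : ℚ) + 1) / (r : ℚ)))
        = (-((1 : ℚ) / (r : ℚ))) * ((r : ℚ) * (b : ℚ) + ((m i : ℤ) : ℚ) + 1) := by
      push_cast
      ring
    rw [hscal]
    simp only [Algebra.smul_def, map_mul, map_neg, pow_succ]
    ring
end

section
/- Let r ≥ 2 and n ≥ 1 be integers, R a commutative ℚ-algebra, ψ : Fin n → R, and c : (Fin n → ℤ) → R a function satisfying the abstract descent relation. Let m̃ : Fin n → ℤ be a tuple with m̃ j ≥ 0 for all j. If there exist an index i and a positive integer a_i with m̃ i = a_i·r - 1 (equivalently, m̃ i ≡ r - 1 mod r), then c m̃ = 0. (This is the final vanishing claim of the paper's Proposition in Section 2: the extended virtual classes cᵛ(m̃) vanish whenever some component of m̃ is congruent to -1 modulo r.) -/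
lemma extended_vanishing_aux {n : ℕ} (r : ℤ) (hr : 2 ≤ r)
    {R : Type*} [CommRing R] [Algebra ℚ R]
    (ψ : Fin n → R) (c : (Fin n → ℤ) → R)
    (hc : DescentRelation r ψ c) :
    ∀ a : ℕ, 0 < a → ∀ mt : Fin n → ℤ, (∀ j, 0 ≤ mt j) → ∀ i : Fin n,
      mt i = (a : ℤ) * r - 1 → c mt = 0 := by
  intro a
  induction a with
  | zero => intro h; exact absurd h (lt_irrefl 0)
  | succ k ih =>
    intro _ mt hmt i hmi
    set m : Fin n → ℤ := fun j => if j = i then mt i - r else mt j with hm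
    have hmeq : mt = m + r • Pi.single i 1 := by
      funext j
      by_cases hj : j = i
      · subst hj
        simp [hm, Pi.single_apply]
      · simp [hm, hj, Pi.single_apply]
    have hmi' : m i = (k : ℤ) * r - 1 := by
      simp [hm, hmi]; ring
    rcases Nat.eq_zero_or_pos k with hk | hk
    · -- base case: m i = -1
      have hadm : Admissible m := by
        right
        refine ⟨i, ?_, fun j hj => ?_⟩
        · rw [hmi']; simp [hk]
        · simpa [hm, hj] using hmt j
      have := hc m hadm i
      rw [← hmeq] at this
      rw [this, hmi', hk]
      norm_num
    · -- inductive case: m all nonneg, c m = 0 by ih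
      have hnn : ∀ j, 0 ≤ m j := by
        intro j
        by_cases hj : j = i
        · subst hj
          rw [hmi']
          have h1 : (1 : ℤ) ≤ (k : ℤ) := by exact_mod_cast hk
          nlinarith
        · simpa [hm, hj] using hmt j
      have hcm : c m = 0 := ih hk m hnn i hmi'
      have := hc m (Or.inl hnn) i
      rw [← hmeq] at this
      rw [this, hcm, mul_zero, smul_zero]

/-- The extended vanishing: if `m̃` has all entries nonnegative and some entry
`m̃ i = a·r - 1` for a positive integer `a` (i.e. `m̃ i ≡ r - 1 mod r`), then
`c m̃ = 0`. -/
theorem extended_vanishing {n : ℕ} (hn : 1 ≤ n) (r : ℤ) (hr : 2 ≤ r)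
    {R : Type*} [CommRing R] [Algebra ℚ R]
    (ψ : Fin n → R) (c : (Fin n → ℤ) → R)
    (hc : DescentRelation r ψ c)
    (mt : Fin n → ℤ) (hmt : ∀ j, 0 ≤ mt j)
    (h : ∃ i : Fin n, ∃ a : ℕ, 0 < a ∧ mt i = (a : ℤ) * r - 1) :
    c mt = 0 := by
  obtain ⟨i, a, ha, hmi⟩ := h
  exact extended_vanishing_aux r hr ψ c hc a ha mt hmt i hmi
end
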